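/- arXiv:2512.09367 — 4 statements merged into one kernel-verified Lean document; each statement's English description precedes it below -/
import Mathlib

section
/- In the star instance described, the VCG threshold payment to each peripheral facility ℓ_i equals 2, so the total VCG cost (payments plus connection cost) is 3k, and the frugality ratio of VCG on this instance is 3k/(k+2) = 3 − 6/(|L|+1). -/
/-! Every user has connection cost at least 1, so every solution costs at least `k`; the
peripheral solution `{ℓ_1, …, ℓ_k}` attains this, and setting `o_{ℓ_i} = 0` changes nothing.
A solution avoiding `ℓ_i` either opens `ℓ_0` at cost 2 or leaves `u_i` at distance 3, so it
costs at least `k + 2`, which `{ℓ_0}` attains. Each threshold payment is therefore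
`(k + 2) - k = 2`. -/

/-- Distance in the star instance: user `u` is at distance 1 from the central facility `0`
and from its own peripheral facility `u+1`, and at distance 3 from all other facilities. -/
noncomputable def starDist (k : ℕ) (u : Fin k) (ℓ : Fin (k + 1)) : ℝ :=
  if ℓ = 0 then 1 else if (ℓ : ℕ) = (u : ℕ) + 1 then 1 else 3

/-- Opening costs in the star instance: 2 for the center, 0 for peripheral facilities. -/
noncomputable def starOpen (k : ℕ) (ℓ : Fin (k + 1)) : ℝ :=
  if ℓ = 0 then 2 else 0

/-- Total cost of a facility set: opening costs plus connection costs (each user connects to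
its nearest open facility). -/
noncomputable def starCost (k : ℕ) (o : Fin (k + 1) → ℝ) (S : Finset (Fin (k + 1))) : ℝ :=
  ∑ ℓ ∈ S, o ℓ + ∑ u : Fin k, ⨅ v : {x // x ∈ S}, starDist k u (v : Fin (k + 1))

/-- `c(OPT(∞, o_{-i}))`: minimum total cost over nonempty facility sets avoiding `i`. -/
noncomputable def vcgInfty (k : ℕ) (o : Fin (k + 1) → ℝ) (i : Fin (k + 1)) : ℝ :=
  sInf {x : ℝ | ∃ S : Finset (Fin (k + 1)), S.Nonempty ∧ i ∉ S ∧ x = starCost k o S}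

/-- `c(OPT(0, o_{-i}))`: minimum total cost over nonempty facility sets when `o_i = 0`. -/
noncomputable def vcgZero (k : ℕ) (o : Fin (k + 1) → ℝ) (i : Fin (k + 1)) : ℝ :=
  sInf {x : ℝ | ∃ S : Finset (Fin (k + 1)), S.Nonempty ∧
    x = starCost k (Function.update o i 0) S}

noncomputable def starConn (k : ℕ) (S : Finset (Fin (k + 1))) (u : Fin k) : ℝ :=
  ⨅ v : {x // x ∈ S}, starDist k u (v : Fin (k + 1))

lemma starCost_eq (k : ℕ) (o : Fin (k + 1) → ℝ) (S : Finset (Fin (k + 1))) :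
    starCost k o S = ∑ ℓ ∈ S, o ℓ + ∑ u, starConn k S u :=
  rfl

section

variable {k : ℕ}

lemma one_le_starDist (u : Fin k) (ℓ : Fin (k + 1)) : 1 ≤ starDist k u ℓ := by
  unfold starDist; split_ifs <;> norm_num

lemma starDist_zero (u : Fin k) : starDist k u 0 = 1 := by
  simp [starDist]

lemma starDist_succ_self (u : Fin k) : starDist k u u.succ = 1 := by
  simp [starDist, Fin.succ_ne_zero]

lemma starDist_eq_three {u : Fin k} {ℓ : Fin (k + 1)} (h0 : ℓ ≠ 0) (hu : ℓ ≠ u.succ) :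
    starDist k u ℓ = 3 := by
  have : (ℓ : ℕ) ≠ u + 1 := fun h => hu (Fin.ext h)
  simp [starDist, h0, this]

lemma starOpen_nonneg (ℓ : Fin (k + 1)) : 0 ≤ starOpen k ℓ := by
  unfold starOpen; split_ifs <;> norm_num

lemma starOpen_of_ne_zero {ℓ : Fin (k + 1)} (h : ℓ ≠ 0) : starOpen k ℓ = 0 :=
  if_neg h

lemma starConn_le {S : Finset (Fin (k + 1))} {ℓ : Fin (k + 1)} (hℓ : ℓ ∈ S) (u : Fin k) :
    starConn k S u ≤ starDist k u ℓ :=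
  ciInf_le (Set.finite_range fun v : {x // x ∈ S} => starDist k u v).bddBelow ⟨ℓ, hℓ⟩

lemma le_starConn {S : Finset (Fin (k + 1))} (hS : S.Nonempty) {u : Fin k} {a : ℝ}
    (h : ∀ ℓ ∈ S, a ≤ starDist k u ℓ) : a ≤ starConn k S u :=
  have := hS.to_subtype
  le_ciInf fun v => h v v.2

lemma one_le_starConn {S : Finset (Fin (k + 1))} (hS : S.Nonempty) (u : Fin k) :
    1 ≤ starConn k S u :=
  le_starConn hS fun ℓ _ => one_le_starDist u ℓ

lemma starConn_eq_one {S : Finset (Fin (k + 1))} {ℓ : Fin (k + 1)} (hℓ : ℓ ∈ S) {u : Fin k}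
    (h : starDist k u ℓ = 1) : starConn k S u = 1 :=
  (h ▸ starConn_le hℓ u).antisymm (one_le_starConn ⟨ℓ, hℓ⟩ u)

lemma le_sum_starConn {S : Finset (Fin (k + 1))} (hS : S.Nonempty) :
    (k : ℝ) ≤ ∑ u, starConn k S u := by
  simpa using Finset.card_nsmul_le_sum Finset.univ _ 1 fun u _ => one_le_starConn hS u

lemma le_starCost {S : Finset (Fin (k + 1))} (hS : S.Nonempty) :
    (k : ℝ) ≤ starCost k (starOpen k) S := by
  rw [starCost_eq]
  linarith [Finset.sum_nonneg fun ℓ (_ : ℓ ∈ S) => starOpen_nonneg (k := k) ℓ,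
    le_sum_starConn hS]

lemma starCost_center : starCost k (starOpen k) {0} = k + 2 := by
  have hconn (u : Fin k) : starConn k {0} u = 1 :=
    starConn_eq_one (Finset.mem_singleton_self 0) (starDist_zero u)
  simp [starCost_eq, hconn, starOpen, add_comm]

lemma starCost_peripheral : starCost k (starOpen k) (Finset.univ.erase 0) = k := by
  have hconn (u : Fin k) : starConn k (Finset.univ.erase 0) u = 1 :=
    starConn_eq_one (by simp [Fin.succ_ne_zero]) (starDist_succ_self u)
  have hopen : ∑ ℓ ∈ Finset.univ.erase 0, starOpen k ℓ = 0 :=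
    Finset.sum_eq_zero fun ℓ hℓ => starOpen_of_ne_zero (Finset.ne_of_mem_erase hℓ)
  simp [starCost_eq, hconn, hopen]

lemma add_two_le_starCost {S : Finset (Fin (k + 1))} (hS : S.Nonempty) {u : Fin k}
    (hu : u.succ ∉ S) : (k : ℝ) + 2 ≤ starCost k (starOpen k) S := by
  rw [starCost_eq]
  have hopen_nonneg := Finset.sum_nonneg fun ℓ (_ : ℓ ∈ S) => starOpen_nonneg (k := k) ℓ
  by_cases h0 : 0 ∈ S
  · have hopen : 2 ≤ ∑ ℓ ∈ S, starOpen k ℓ := by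
      simpa [starOpen] using Finset.single_le_sum (fun ℓ _ => starOpen_nonneg ℓ) h0
    linarith [le_sum_starConn hS]
  · -- every user's excess over the baseline cost 1 is nonnegative, and `u`'s is at least 2
    have hfar : 3 ≤ starConn k S u := le_starConn hS fun ℓ hℓ =>
      (starDist_eq_three (ne_of_mem_of_not_mem hℓ h0) (ne_of_mem_of_not_mem hℓ hu)).ge
    have hexcess : starConn k S u - 1 ≤ ∑ v, (starConn k S v - 1) :=
      Finset.single_le_sum (fun v _ => sub_nonneg.2 (one_le_starConn hS v))
        (Finset.mem_univ u)
    simp only [Finset.sum_sub_distrib, Finset.sum_const, Finset.card_univ, Fintype.card_fin,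
      nsmul_eq_mul, mul_one] at hexcess
    linarith

lemma vcgInfty_star {i : Fin (k + 1)} (hi : i ≠ 0) : vcgInfty k (starOpen k) i = k + 2 := by
  obtain ⟨u, rfl⟩ := Fin.exists_succ_eq.2 hi
  refine IsLeast.csInf_eq ⟨⟨{0}, Finset.singleton_nonempty 0, ?_, starCost_center.symm⟩, ?_⟩
  · simp
  · rintro x ⟨S, hS, huS, rfl⟩
    exact add_two_le_starCost hS huS

lemma vcgZero_star {i : Fin (k + 1)} (hi : i ≠ 0) : vcgZero k (starOpen k) i = k := by
  rw [vcgZero, Function.update_eq_self_iff.2 (starOpen_of_ne_zero hi).symm]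
  refine IsLeast.csInf_eq ⟨⟨Finset.univ.erase 0, ⟨i, by simp [hi]⟩,
    starCost_peripheral.symm⟩, ?_⟩
  rintro x ⟨S, hS, rfl⟩
  exact le_starCost hS

lemma vcg_payment_star {i : Fin (k + 1)} (hi : i ≠ 0) :
    vcgInfty k (starOpen k) i - vcgZero k (starOpen k) i = 2 := by
  rw [vcgInfty_star hi, vcgZero_star hi]
  ring

end

theorem star_instance_vcg_general (k : ℕ) :
    (∀ i : Fin (k + 1), i ≠ 0 →
      vcgInfty k (starOpen k) i - vcgZero k (starOpen k) i = 2) ∧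
    (∑ i ∈ Finset.univ.filter (fun i : Fin (k + 1) => i ≠ 0),
        (vcgInfty k (starOpen k) i - vcgZero k (starOpen k) i)) + (k : ℝ) = 3 * k ∧
    ((∑ i ∈ Finset.univ.filter (fun i : Fin (k + 1) => i ≠ 0),
        (vcgInfty k (starOpen k) i - vcgZero k (starOpen k) i)) + (k : ℝ))
        / ((k : ℝ) + 2)
      = 3 * (k : ℝ) / ((k : ℝ) + 2) ∧
    3 * (k : ℝ) / ((k : ℝ) + 2) = 3 - 6 / (((k : ℝ) + 1) + 1) := by
  have hsum : ∑ i ∈ Finset.univ.filter (fun i : Fin (k + 1) => i ≠ 0),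
      (vcgInfty k (starOpen k) i - vcgZero k (starOpen k) i) = 2 * k := by
    rw [Finset.sum_congr rfl fun i hi => vcg_payment_star (Finset.mem_filter.1 hi).2,
      Finset.sum_const, Finset.filter_ne', Finset.card_erase_of_mem (Finset.mem_univ 0)]
    simp [mul_comm]
  have hsum_add : (∑ i ∈ Finset.univ.filter (fun i : Fin (k + 1) => i ≠ 0),
      (vcgInfty k (starOpen k) i - vcgZero k (starOpen k) i)) + (k : ℝ) = 3 * k := by
    rw [hsum]; ring
  refine ⟨fun i => vcg_payment_star, hsum_add, by rw [hsum_add], ?_⟩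
  field_simp
  ring

/-- In the star instance, the VCG threshold payment to each peripheral facility equals 2, so
the total VCG cost (payments plus connection cost k of OPT) is 3k, and the frugality ratio on
this instance, against the frugal solution `{ℓ_0}` of cost k+2, is
`3k/(k+2) = 3 − 6/(|L|+1)` where `|L| = k+1`. -/
theorem star_instance_vcg (k : ℕ) (hk : 1 ≤ k) :
    (∀ i : Fin (k + 1), i ≠ 0 →
      vcgInfty k (starOpen k) i - vcgZero k (starOpen k) i = 2) ∧
    (∑ i ∈ Finset.univ.filter (fun i : Fin (k + 1) => i ≠ 0),
        (vcgInfty k (starOpen k) i - vcgZero k (starOpen k) i)) + (k : ℝ) = 3 * k ∧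
    ((∑ i ∈ Finset.univ.filter (fun i : Fin (k + 1) => i ≠ 0),
        (vcgInfty k (starOpen k) i - vcgZero k (starOpen k) i)) + (k : ℝ))
        / ((k : ℝ) + 2)
      = 3 * (k : ℝ) / ((k : ℝ) + 2) ∧
    3 * (k : ℝ) / ((k : ℝ) + 2) = 3 - 6 / (((k : ℝ) + 1) + 1) :=
  star_instance_vcg_general k
end

section
/- The frugality ratio of the VCG auction for metric uncapacitated facility location is at least 3 − 6/(n+1) for instances with n facility locations; in particular, the worst-case frugality ratio of VCG is at least 3 (taking n → ∞). -/
/-!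
The instance is a star in `ℓ¹(Fin k)`: a hub `0` with opening cost 2 and, on each of the `k`
spokes, a user at distance 1 and a free facility at distance 2 from the hub. Opening all spoke
facilities is optimal, at cost `k`. When one spoke facility bids `b`, it stays in an optimal
solution exactly while `b ≤ 2`, because dropping it costs either the hub (+2) or a detour of
length 3 instead of 1 for its user (+2). So VCG pays `2k` on top of the connection cost `k`,
while the only solution disjoint from the optimum, the hub alone, costs `k + 2`: the ratio is
`3k / (k + 2) = 3 - 6 / (n + 1)` for `n = k + 1` locations.
-/

section UFL

variable {M : Type} [MetricSpace M] [DecidableEq M]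

/-- Total connection cost of users U to facility set S: each user connects to the
nearest facility in S. -/
noncomputable def connCost (U S : Finset M) : ℝ :=
  ∑ u ∈ U, ⨅ v : {x // x ∈ S}, dist u (v : M)

/-- Total cost of a facility set: opening costs plus connection cost. -/
noncomputable def totalCost (o : M → ℝ) (U S : Finset M) : ℝ :=
  ∑ ℓ ∈ S, o ℓ + connCost U S

/-- `S` is an optimal (cost-minimizing) nonempty facility set within `L`. -/
def IsOpt (o : M → ℝ) (U L S : Finset M) : Prop :=
  S ⊆ L ∧ S.Nonempty ∧
    ∀ T : Finset M, T ⊆ L → T.Nonempty → totalCost o U S ≤ totalCost o U T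

/-- VCG threshold payment to facility ℓ: the largest bid `b ≥ 0` such that ℓ is still in an
optimal solution when its opening cost is `b` and the others are unchanged. -/
noncomputable def thresholdPay (o : M → ℝ) (U L : Finset M) (ℓ : M) : ℝ :=
  sSup {b : ℝ | 0 ≤ b ∧
    ∃ S : Finset M, IsOpt (Function.update o ℓ b) U L S ∧ ℓ ∈ S}

/-- Cost of the frugal solution: the minimum total cost among nonempty facility sets
disjoint from the optimal set. -/
noncomputable def frugalCost (o : M → ℝ) (U L OPTset : Finset M) : ℝ :=
  sInf {x : ℝ | ∃ T : Finset M, T ⊆ L \ OPTset ∧ T.Nonempty ∧ x = totalCost o U T}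

end UFL

open Finset

section UFLLemmas

variable {M : Type} [MetricSpace M]

lemma le_iInf_dist {T : Finset M} {u : M} {c : ℝ} (hT : T.Nonempty)
    (h : ∀ x ∈ T, c ≤ dist u x) : c ≤ ⨅ v : T, dist u (v : M) :=
  have : Nonempty T := hT.coe_sort
  le_ciInf fun v => h v v.2

lemma iInf_dist_le {T : Finset M} {x : M} (hx : x ∈ T) (u : M) :
    ⨅ v : T, dist u (v : M) ≤ dist u x :=
  ciInf_le ⟨0, Set.forall_mem_range.mpr fun _ => dist_nonneg⟩ (⟨x, hx⟩ : T)

variable [DecidableEq M]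

lemma thresholdPay_eq {o : M → ℝ} {U L : Finset M} {ℓ : M} {p : ℝ} (hp : 0 ≤ p)
    (hopt : ∃ S, IsOpt (Function.update o ℓ p) U L S ∧ ℓ ∈ S)
    (hle : ∀ b, 0 ≤ b → ∀ S, IsOpt (Function.update o ℓ b) U L S → ℓ ∈ S → b ≤ p) :
    thresholdPay o U L ℓ = p :=
  IsGreatest.csSup_eq ⟨⟨hp, hopt⟩, fun b ⟨hb, S, hS, hℓ⟩ => hle b hb S hS hℓ⟩

lemma frugalCost_eq_of_sdiff_eq_singleton {o : M → ℝ} {U L S : Finset M} {x : M}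
    (h : L \ S = {x}) : frugalCost o U L S = totalCost o U {x} := by
  have : {c : ℝ | ∃ T, T ⊆ L \ S ∧ T.Nonempty ∧ c = totalCost o U T} = {totalCost o U {x}} := by
    ext c
    simp only [h, subset_singleton_iff, Set.mem_ofPred_eq, Set.mem_singleton_iff]
    constructor
    · rintro ⟨T, rfl | rfl, hT, rfl⟩
      exacts [absurd hT (by simp), rfl]
    · rintro rfl
      exact ⟨{x}, Or.inr rfl, singleton_nonempty x, rfl⟩
  rw [frugalCost, this, csInf_singleton]

end UFLLemmas

noncomputable def frugalityRatio {M : Type} [MetricSpace M] [DecidableEq M] (o : M → ℝ)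
    (U L S : Finset M) : ℝ :=
  ((∑ ℓ ∈ S, thresholdPay o U L ℓ) + connCost U S) / frugalCost o U L S

theorem PiLp.dist_single_of_ne {ι : Type*} [Fintype ι] [DecidableEq ι] {E : Type*}
    [SeminormedAddCommGroup E] {i j : ι} (hij : i ≠ j) (a b : E) :
    dist (PiLp.single 1 i a : PiLp 1 fun _ : ι => E) (PiLp.single 1 j b) = ‖a‖ + ‖b‖ := by
  rw [PiLp.dist_eq_of_L1, Fintype.sum_eq_add i j hij]
  · simp [hij, hij.symm]
  · rintro x ⟨hxi, hxj⟩
    simp [hxi, hxj]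

namespace StarInstance

variable {k : ℕ}

abbrev Star (k : ℕ) : Type := PiLp 1 fun _ : Fin k => ℝ

def user (i : Fin k) : Star k := PiLp.single 1 i 1

def facility (i : Fin k) : Star k := PiLp.single 1 i 2

lemma dist_user_zero (i : Fin k) : dist (user i) 0 = 1 := by
  simp [user]

lemma dist_user_facility (i j : Fin k) : dist (user i) (facility j) = if i = j then 1 else 3 := by
  split_ifs with h
  · rw [user, facility, h, PiLp.dist_single_same, Real.dist_eq]
    norm_num
  · rw [user, facility, PiLp.dist_single_of_ne h]
    norm_num

lemma user_injective : Function.Injective (user : Fin k → Star k) := fun i j h => by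
  simpa [user] using congrArg (· i) h

lemma facility_injective : Function.Injective (facility : Fin k → Star k) := fun i j h => by
  simpa [facility] using congrArg (· i) h

lemma facility_ne_zero (i : Fin k) : facility i ≠ 0 := by
  simp [facility]

variable (k)

def users : Finset (Star k) := univ.map ⟨user, user_injective⟩

def facilities : Finset (Star k) := univ.map ⟨facility, facility_injective⟩

noncomputable def locations : Finset (Star k) := insert 0 (facilities k)

noncomputable def starCost : Star k → ℝ := Pi.single 0 2

variable {k}

lemma facility_mem_facilities (i : Fin k) : facility i ∈ facilities k := by
  simp [facilities]

lemma zero_notMem_facilities : (0 : Star k) ∉ facilities k := by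
  simp [facilities, facility_ne_zero]

lemma mem_locations {x : Star k} : x ∈ locations k ↔ x = 0 ∨ ∃ i, facility i = x := by
  simp [locations, facilities]

lemma card_locations : (locations k).card = k + 1 := by
  rw [locations, card_insert_of_notMem zero_notMem_facilities]
  simp [facilities]

lemma connCost_users (T : Finset (Star k)) :
    connCost (users k) T = ∑ i, ⨅ v : T, dist (user i) (v : Star k) := by
  simp [connCost, users]

lemma one_le_dist_user (i : Fin k) {x : Star k} (hx : x ∈ locations k) : 1 ≤ dist (user i) x := by
  obtain rfl | ⟨j, rfl⟩ := mem_locations.mp hx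
  · rw [dist_user_zero]
  · rw [dist_user_facility]
    split_ifs <;> norm_num

lemma connCost_eq_of_dist_eq_one {T : Finset (Star k)} (hT : T ⊆ locations k)
    (h : ∀ i, ∃ x ∈ T, dist (user i) x = 1) : connCost (users k) T = k := by
  rw [connCost_users]
  refine (Fintype.sum_congr _ (fun _ ↦ 1) fun i => le_antisymm ?_ ?_).trans (by simp)
  · obtain ⟨x, hx, hdist⟩ := h i
    exact (iInf_dist_le hx _).trans_eq hdist
  · obtain ⟨x, hx, -⟩ := h i
    exact le_iInf_dist ⟨x, hx⟩ fun y hy => one_le_dist_user i (hT hy)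

lemma connCost_facilities : connCost (users k) (facilities k) = k :=
  connCost_eq_of_dist_eq_one (subset_insert _ _)
    fun i => ⟨facility i, facility_mem_facilities i, by simp [dist_user_facility]⟩

lemma connCost_zero : connCost (users k) {0} = k :=
  connCost_eq_of_dist_eq_one (by simp [locations])
    fun i => ⟨0, mem_singleton_self _, dist_user_zero i⟩

lemma le_connCost {T : Finset (Star k)} (hT : T ⊆ locations k) (hne : T.Nonempty) :
    (k : ℝ) ≤ connCost (users k) T := by
  rw [connCost_users]
  simpa using sum_le_sum (s := univ) fun i _ =>
    le_iInf_dist hne fun x hx => one_le_dist_user i (hT hx)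

lemma add_two_le_connCost {T : Finset (Star k)} (i : Fin k) (hT : T ⊆ locations k)
    (hne : T.Nonempty) (h0 : 0 ∉ T) (hi : facility i ∉ T) :
    (k : ℝ) + 2 ≤ connCost (users k) T := by
  rw [connCost_users]
  calc (k : ℝ) + 2 = ∑ j, (1 + Pi.single i 2 j) := by simp [sum_add_distrib]
    _ ≤ _ := sum_le_sum fun j _ => le_iInf_dist hne fun x hx => ?_
  obtain rfl | ⟨j', rfl⟩ := mem_locations.mp (hT hx)
  · exact absurd hx h0
  have hj' : j' ≠ i := by rintro rfl; exact hi hx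
  rw [dist_user_facility]
  by_cases hj : j = i
  · subst hj
    norm_num [hj'.symm]
  · split_ifs <;> simp [hj]

lemma starCost_zero : starCost k 0 = 2 := by simp [starCost]

lemma starCost_facility (i : Fin k) : starCost k (facility i) = 0 := by
  simp [starCost, facility_ne_zero]

lemma starCost_nonneg (x : Star k) : 0 ≤ starCost k x := by
  rw [starCost, Pi.single_apply]
  split_ifs <;> norm_num

lemma update_starCost_nonneg (i : Fin k) {b : ℝ} (hb : 0 ≤ b) (x : Star k) :
    0 ≤ Function.update (starCost k) (facility i) b x := by
  rw [Function.update_apply]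
  split_ifs
  exacts [hb, starCost_nonneg x]

lemma update_starCost_zero (i : Fin k) (b : ℝ) :
    Function.update (starCost k) (facility i) b 0 = 2 := by
  rw [Function.update_of_ne (facility_ne_zero i).symm, starCost_zero]

lemma totalCost_facilities (o : Star k → ℝ) :
    totalCost o (users k) (facilities k) = ∑ i, o (facility i) + k := by
  rw [totalCost, connCost_facilities, facilities, sum_map]
  rfl

lemma totalCost_zero (o : Star k → ℝ) : totalCost o (users k) {0} = o 0 + k := by
  rw [totalCost, sum_singleton, connCost_zero]

lemma isOpt_update (i : Fin k) {b : ℝ} (hb0 : 0 ≤ b) (hb2 : b ≤ 2) :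
    IsOpt (Function.update (starCost k) (facility i) b) (users k) (locations k)
      (facilities k) := by
  set o := Function.update (starCost k) (facility i) b
  refine ⟨subset_insert _ _, ⟨_, facility_mem_facilities i⟩, fun T hT hne => ?_⟩
  have hS : totalCost o (users k) (facilities k) = b + k := by
    simp [o, totalCost_facilities, Function.update_apply, facility_injective.eq_iff,
      starCost_facility]
  have hcost : ∀ x ∈ T, o x ≤ ∑ ℓ ∈ T, o ℓ :=
    fun x hx => single_le_sum (fun y _ => update_starCost_nonneg i hb0 y) hx
  rw [hS, totalCost]
  by_cases hi : facility i ∈ T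
  · have hopen : b ≤ ∑ ℓ ∈ T, o ℓ := by simpa [o] using hcost _ hi
    linarith [le_connCost hT hne]
  by_cases h0 : 0 ∈ T
  · have hopen : 2 ≤ ∑ ℓ ∈ T, o ℓ := by simpa [o, update_starCost_zero] using hcost _ h0
    linarith [le_connCost hT hne]
  · have hopen : 0 ≤ ∑ ℓ ∈ T, o ℓ := sum_nonneg fun y _ => update_starCost_nonneg i hb0 y
    linarith [add_two_le_connCost i hT hne h0 hi]

lemma isOpt_starCost (hk : 0 < k) :
    IsOpt (starCost k) (users k) (locations k) (facilities k) := by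
  simpa [← starCost_facility ⟨0, hk⟩] using isOpt_update ⟨0, hk⟩ le_rfl zero_le_two

lemma thresholdPay_facility (i : Fin k) :
    thresholdPay (starCost k) (users k) (locations k) (facility i) = 2 := by
  refine thresholdPay_eq zero_le_two
    ⟨_, isOpt_update i zero_le_two le_rfl, facility_mem_facilities i⟩ fun b hb S hS hiS => ?_
  have hcost_zero := hS.2.2 {0} (by simp [locations]) (singleton_nonempty _)
  rw [totalCost_zero, update_starCost_zero, totalCost] at hcost_zero
  have hopen : b ≤ ∑ ℓ ∈ S, Function.update (starCost k) (facility i) b ℓ := by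
    simpa using single_le_sum (fun y _ => update_starCost_nonneg i hb y) hiS
  linarith [le_connCost hS.1 hS.2.1]

lemma frugalityRatio_star :
    frugalityRatio (starCost k) (users k) (locations k) (facilities k) = 3 - 6 / (k + 2) := by
  have hsdiff : locations k \ facilities k = {0} := by
    rw [locations, insert_sdiff_of_notMem _ zero_notMem_facilities, sdiff_self]; rfl
  rw [frugalityRatio, frugalCost_eq_of_sdiff_eq_singleton hsdiff, totalCost_zero, starCost_zero,
    connCost_facilities, facilities, sum_map]
  simp only [Function.Embedding.coeFn_mk, thresholdPay_facility, sum_const, card_univ,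
    Fintype.card_fin, nsmul_eq_mul]
  field_simp
  ring

end StarInstance

open StarInstance in
lemma exists_three_sub_le_frugalityRatio (n : ℕ) (hn : 2 ≤ n) :
    ∃ (M : Type) (_ : MetricSpace M) (_ : DecidableEq M) (U L S : Finset M) (o : M → ℝ),
      L.card = n ∧ (∀ ℓ, 0 ≤ o ℓ) ∧ IsOpt o U L S ∧
        3 - 6 / ((n : ℝ) + 1) ≤ frugalityRatio o U L S := by
  obtain ⟨k, rfl⟩ : ∃ k, n = k + 1 := ⟨n - 1, by omega⟩
  refine ⟨Star k, inferInstance, inferInstance, users k, locations k, facilities k, starCost k,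
    card_locations, starCost_nonneg, isOpt_starCost (by omega), ?_⟩
  rw [frugalityRatio_star]
  exact le_of_eq (by push_cast; ring)

/-- The frugality ratio of the VCG auction for metric UFL is at least `3 − 6/(n+1)` on
instances with n facility locations; in particular its worst-case frugality ratio is at
least 3 (taking n → ∞). -/
theorem vcg_frugality_lower_bound :
    (∀ n : ℕ, 2 ≤ n →
      ∃ (M : Type) (_ : MetricSpace M) (_ : DecidableEq M)
        (U L S : Finset M) (o : M → ℝ),
        L.card = n ∧ (∀ ℓ, 0 ≤ o ℓ) ∧ IsOpt o U L S ∧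
        3 - 6 / ((n : ℝ) + 1) ≤
          ((∑ ℓ ∈ S, thresholdPay o U L ℓ) + connCost U S) / frugalCost o U L S) ∧
    (∀ r : ℝ, r < 3 →
      ∃ (M : Type) (_ : MetricSpace M) (_ : DecidableEq M)
        (U L S : Finset M) (o : M → ℝ),
        (∀ ℓ, 0 ≤ o ℓ) ∧ IsOpt o U L S ∧
        r < ((∑ ℓ ∈ S, thresholdPay o U L ℓ) + connCost U S) / frugalCost o U L S) := by
  refine ⟨exists_three_sub_le_frugalityRatio, fun r hr => ?_⟩
  have h_tendsto :
      Filter.Tendsto (fun n : ℕ => 3 - 6 / ((n : ℝ) + 1)) Filter.atTop (nhds 3) := by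
    simpa [div_eq_mul_inv] using
      ((tendsto_one_div_add_atTop_nhds_zero_nat (𝕜 := ℝ)).const_mul 6).const_sub 3
  obtain ⟨n, hrn, hn⟩ :=
    ((h_tendsto.eventually (lt_mem_nhds hr)).and (Filter.eventually_ge_atTop 2)).exists
  obtain ⟨M, _, _, U, L, S, o, -, ho, hopt, hratio⟩ := exists_three_sub_le_frugalityRatio n hn
  exact ⟨M, _, _, U, L, S, o, ho, hopt, hrn.trans_le hratio⟩
end

section
/- If each payment p_ℓ for ℓ ∈ S¹ satisfies p_ℓ ≤ λ·ô_ℓ, with S¹ ⊆ Ŝ, Ŝ a minimizer of predicted cost ĉ, and ô_ℓ ≤ η·o_ℓ for all ℓ with η ≥ 1, then Σ_{ℓ∈S¹} p_ℓ ≤ λ·η·c(F) for any facility set F. -/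
/-!
The minimality of `Ŝ` bounds the predicted opening cost of `Ŝ`, hence of its subset `S¹`, by
`ĉ(F)`; the prediction error `ô ≤ η·o` turns `ĉ(F)` into at most `η·c(F)`, and the payments lose
one more factor `λ`.
-/

open Finset

namespace FacilityLocation

variable {L : Type*}

/-- The paper's `ĉ` is `cost dU ô` and its `c` is `cost dU o`. -/
def cost (d : Finset L → ℝ) (f : L → ℝ) (S : Finset L) : ℝ :=
  d S + ∑ ℓ ∈ S, f ℓ

theorem sum_le_cost_of_subset_minimizer {d : Finset L → ℝ} {f : L → ℝ} (hd : ∀ S, 0 ≤ d S)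
    (hf : ∀ ℓ, 0 ≤ f ℓ) {Smin S' : Finset L} (hmin : ∀ S, cost d f Smin ≤ cost d f S)
    (hS' : S' ⊆ Smin) (F : Finset L) :
    ∑ ℓ ∈ S', f ℓ ≤ cost d f F :=
  calc ∑ ℓ ∈ S', f ℓ ≤ ∑ ℓ ∈ Smin, f ℓ := sum_le_sum_of_subset_of_nonneg hS' fun ℓ _ _ => hf ℓ
    _ ≤ cost d f Smin := le_add_of_nonneg_left (hd Smin)
    _ ≤ cost d f F := hmin F

theorem cost_le_mul_cost {d : Finset L → ℝ} {f g : L → ℝ} {η : ℝ} (hη : 1 ≤ η)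
    (hfg : ∀ ℓ, f ℓ ≤ η * g ℓ) (S : Finset L) (hd : 0 ≤ d S) :
    cost d f S ≤ η * cost d g S :=
  calc cost d f S ≤ d S + η * ∑ ℓ ∈ S, g ℓ := by
        rw [cost, mul_sum]
        exact add_le_add_right (sum_le_sum fun ℓ _ => hfg ℓ) _
    _ ≤ η * d S + η * ∑ ℓ ∈ S, g ℓ := by gcongr; exact le_mul_of_one_le_left hd hη
    _ = η * cost d g S := (mul_add η _ _).symm

end FacilityLocation

open FacilityLocation in
theorem low_threshold_payment_bound_general
    {L : Type*}
    (o ohat p : L → ℝ) (hohat : ∀ ℓ, 0 ≤ ohat ℓ)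
    (η lam : ℝ) (hη : 1 ≤ η) (hlam : 1 ≤ lam)
    (hpred : ∀ ℓ, ohat ℓ ≤ η * o ℓ)
    (dU : Finset L → ℝ) (hdU : ∀ S, 0 ≤ dU S)
    (Shat S1 : Finset L) (hsub : S1 ⊆ Shat)
    (hmin : ∀ S : Finset L, dU Shat + ∑ ℓ ∈ Shat, ohat ℓ ≤ dU S + ∑ ℓ ∈ S, ohat ℓ)
    (hpay : ∀ ℓ ∈ S1, p ℓ ≤ lam * ohat ℓ) :
    ∀ F : Finset L, ∑ ℓ ∈ S1, p ℓ ≤ lam * η * (dU F + ∑ ℓ ∈ F, o ℓ) := by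
  intro F
  have hlam0 : 0 ≤ lam := zero_le_one.trans hlam
  calc ∑ ℓ ∈ S1, p ℓ ≤ ∑ ℓ ∈ S1, lam * ohat ℓ := sum_le_sum hpay
    _ = lam * ∑ ℓ ∈ S1, ohat ℓ := (mul_sum _ _ _).symm
    _ ≤ lam * cost dU ohat F :=
        mul_le_mul_of_nonneg_left (sum_le_cost_of_subset_minimizer hdU hohat hmin hsub F) hlam0
    _ ≤ lam * (η * cost dU o F) :=
        mul_le_mul_of_nonneg_left (cost_le_mul_cost hη hpred F (hdU F)) hlam0
    _ = lam * η * (dU F + ∑ ℓ ∈ F, o ℓ) := (mul_assoc _ _ _).symm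

/-- If each payment `p_ℓ` for `ℓ ∈ S¹` satisfies `p_ℓ ≤ λ·ô_ℓ`, with `S¹ ⊆ Ŝ`, `Ŝ` a minimizer
of the predicted cost `ĉ`, and `ô_ℓ ≤ η·o_ℓ` for all ℓ with η, λ ≥ 1, then
`Σ_{ℓ∈S¹} p_ℓ ≤ λ·η·c(F)` for any facility set F. -/
theorem low_threshold_payment_bound
    {L : Type*} [Fintype L]
    (o ohat p : L → ℝ) (ho : ∀ ℓ, 0 ≤ o ℓ) (hohat : ∀ ℓ, 0 ≤ ohat ℓ)
    (η lam : ℝ) (hη : 1 ≤ η) (hlam : 1 ≤ lam)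
    (hpred : ∀ ℓ, ohat ℓ ≤ η * o ℓ)
    (dU : Finset L → ℝ) (hdU : ∀ S, 0 ≤ dU S)
    (Shat S1 : Finset L) (hsub : S1 ⊆ Shat)
    (hmin : ∀ S : Finset L, dU Shat + ∑ ℓ ∈ Shat, ohat ℓ ≤ dU S + ∑ ℓ ∈ S, ohat ℓ)
    (hpay : ∀ ℓ ∈ S1, p ℓ ≤ lam * ohat ℓ) :
    ∀ F : Finset L, ∑ ℓ ∈ S1, p ℓ ≤ lam * η * (dU F + ∑ ℓ ∈ F, o ℓ) :=
  low_threshold_payment_bound_general o ohat p hohat η lam hη hlam hpred dU hdU Shat S1 hsub hmin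
    hpay
end

section
/- Sorted-chain telescoping bound: let x_1, ..., x_n be points (facilities) with associated finite user sets A_1, ..., A_n in a metric space satisfying |A_1| ≤ ... ≤ |A_n|, and let f be a point. Then Σ_{j=1}^{n-1} Σ_{a∈A_j} d(a, x_{j+1}) + Σ_{a∈A_n} d(a, f) ≤ 2·Σ_{j=1}^n Σ_{a∈A_j} d(a,f) + Σ_{j=2}^n Σ_{a∈A_j} d(a, x_j). -/
/-!
Route each user `a ∈ A j` to `x (j+1)` through `f`: this costs `d(a,f)` plus `d(f, x (j+1))`,
and since `|A j| ≤ |A (j+1)|`, the `|A j|` copies of `d(f, x (j+1))` are paid for by detouring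
once through each user `b ∈ A (j+1)`, i.e. by `Σ_b d(b,f) + d(b, x (j+1))`. Summing over `j`,
each sum `Σ_{A j} d(·,f)` is charged at most twice.
-/

open Finset

section RerouteThroughHub

variable {M : Type*} [PseudoMetricSpace M]

theorem sum_dist_le_sum_dist_add_card_mul_dist (s : Finset M) (f y : M) :
    ∑ a ∈ s, dist a y ≤ ∑ a ∈ s, dist a f + s.card * dist f y := by
  calc ∑ a ∈ s, dist a y ≤ ∑ a ∈ s, (dist a f + dist f y) :=
        sum_le_sum fun a _ => dist_triangle a f y
    _ = ∑ a ∈ s, dist a f + s.card * dist f y := by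
        rw [sum_add_distrib, sum_const, nsmul_eq_mul]

theorem card_mul_dist_le_sum_dist_add_sum_dist (t : Finset M) (f y : M) :
    t.card * dist f y ≤ ∑ b ∈ t, dist b f + ∑ b ∈ t, dist b y := by
  rw [← sum_add_distrib, ← nsmul_eq_mul]
  exact card_nsmul_le_sum t _ _ fun b _ => dist_comm b f ▸ dist_triangle f b y

theorem sum_dist_le_of_card_le {s t : Finset M} (hst : s.card ≤ t.card) (f y : M) :
    ∑ a ∈ s, dist a y ≤ ∑ a ∈ s, dist a f + ∑ b ∈ t, dist b f + ∑ b ∈ t, dist b y := by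
  have hcard : (s.card : ℝ) * dist f y ≤ t.card * dist f y := by
    gcongr
  linarith [sum_dist_le_sum_dist_add_card_mul_dist s f y,
    card_mul_dist_le_sum_dist_add_sum_dist t f y]

end RerouteThroughHub

theorem sum_range_succ_shift_le_sum_range_succ {g : ℕ → ℝ} (hg : 0 ≤ g 0) (m : ℕ) :
    ∑ j ∈ range m, g (j + 1) ≤ ∑ j ∈ range (m + 1), g j := by
  rw [sum_range_succ']
  linarith

/-- Sorted-chain telescoping bound: for points `x 0, …, x (n-1)` with associated finite user
sets `A 0, …, A (n-1)` of non-decreasing cardinality and a point f,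
`Σ_{j=0}^{n-2} Σ_{a∈A j} d(a, x (j+1)) + Σ_{a∈A (n-1)} d(a,f)`
is at most
`2·Σ_{j=0}^{n-1} Σ_{a∈A j} d(a,f) + Σ_{j=1}^{n-1} Σ_{a∈A j} d(a, x j)`. -/
theorem sorted_chain_telescoping
    {M : Type*} [MetricSpace M]
    (n : ℕ) (hn : 1 ≤ n) (x : ℕ → M) (A : ℕ → Finset M) (f : M)
    (hcard : ∀ i j : ℕ, i ≤ j → j < n → (A i).card ≤ (A j).card) :
    (∑ j ∈ Finset.range (n - 1), ∑ a ∈ A j, dist a (x (j + 1)))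
        + ∑ a ∈ A (n - 1), dist a f
      ≤ 2 * (∑ j ∈ Finset.range n, ∑ a ∈ A j, dist a f)
        + ∑ j ∈ Finset.range (n - 1), ∑ a ∈ A (j + 1), dist a (x (j + 1)) := by
  obtain ⟨m, rfl⟩ := Nat.exists_eq_add_of_le' hn
  simp only [Nat.add_sub_cancel]
  set S : ℕ → ℝ := fun j => ∑ a ∈ A j, dist a f
  set D : ℕ → ℝ := fun j => ∑ a ∈ A (j + 1), dist a (x (j + 1))
  have shift : ∑ j ∈ range m, S (j + 1) ≤ ∑ j ∈ range (m + 1), S j :=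
    sum_range_succ_shift_le_sum_range_succ (sum_nonneg fun a _ => dist_nonneg) m
  calc (∑ j ∈ range m, ∑ a ∈ A j, dist a (x (j + 1))) + S m
      ≤ ∑ j ∈ range m, (S j + S (j + 1) + D j) + S m := by
        gcongr with j hj
        exact sum_dist_le_of_card_le (hcard j (j + 1) (by omega) (by simp at hj; omega)) _ _
    _ = ∑ j ∈ range (m + 1), S j + ∑ j ∈ range m, S (j + 1) + ∑ j ∈ range m, D j := by
        rw [sum_add_distrib, sum_add_distrib, sum_range_succ]
        ring
    _ ≤ 2 * ∑ j ∈ range (m + 1), S j + ∑ j ∈ range m, D j := by linarith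
end
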